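/- Under the hypotheses of the previous lemma, suppose additionally that ν(X × B × C) = μ(B)μ(C) for all measurable B, C, and that the collection of all automorphisms S satisfying T_i^{-1}ST_i → Id and T_j^{-1}ST_j → Id generates an ergodic action. Then ν = μ × μ × μ. -/

import Mathlib

/-!
Fix measurable `B` and `C`. The measure `ρ D = ν (D × B × C)` is dominated by `μ`. If `S` is
homoclinic, the conjugates `(T n)⁻¹ S (T n)` tend to the identity, so `S (T n B)` and `S (T m C)`
are almost `T n B` and `T m C`; hence `μ (S D ∩ T n B ∩ T m C)` and `μ (D ∩ T n B ∩ T m C)`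
have the same limit and `ρ` is `S`-invariant. The density of `ρ` with respect to `μ` is then
invariant under an ergodic family, hence constant, equal to `ρ X = μ B * μ C`. So `ν` agrees with
`μ × μ × μ` on boxes.
-/

open MeasureTheory Filter Set
open scoped symmDiff ENNReal Topology

lemma ENNReal.tendsto_of_le_add_of_le_add {ι : Type*} {l : Filter ι} {f g e : ι → ℝ≥0∞}
    {a : ℝ≥0∞} (ha : a ≠ ∞) (hg : Tendsto g l (𝓝 a)) (he : Tendsto e l (𝓝 0))
    (hfg : ∀ i, f i ≤ g i + e i) (hgf : ∀ i, g i ≤ f i + e i) : Tendsto f l (𝓝 a) := by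
  refine tendsto_of_tendsto_of_tendsto_of_le_of_le (g := fun i => g i - e i)
    (h := fun i => g i + e i) ?_ ?_ (fun i => tsub_le_iff_right.mpr (hgf i)) hfg
  · simpa using ENNReal.Tendsto.sub hg he (Or.inl ha)
  · simpa using hg.add he

section

variable {X : Type*} [MeasurableSpace X] {μ : Measure X}

lemma measure_inter_inter_le_add_symmDiff (μ : Measure X) (A U V U' V' : Set X) :
    μ (A ∩ U' ∩ V') ≤ μ (A ∩ U ∩ V) + (μ (U' ∆ U) + μ (V' ∆ V)) := by
  have hsub : A ∩ U' ∩ V' ⊆ (A ∩ U ∩ V) ∪ ((U' ∆ U) ∪ (V' ∆ V)) := by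
    intro x
    simp only [mem_inter_iff, mem_union, mem_symmDiff]
    tauto
  calc μ (A ∩ U' ∩ V') ≤ μ ((A ∩ U ∩ V) ∪ ((U' ∆ U) ∪ (V' ∆ V))) := measure_mono hsub
    _ ≤ μ (A ∩ U ∩ V) + μ ((U' ∆ U) ∪ (V' ∆ V)) := measure_union_le _ _
    _ ≤ μ (A ∩ U ∩ V) + (μ (U' ∆ U) + μ (V' ∆ V)) := by gcongr; exact measure_union_le _ _

namespace MeasureTheory.MeasurePreserving

variable {S : X ≃ᵐ X}

lemma measure_image_equiv (hS : MeasurePreserving S μ μ) (s : Set X) : μ (S '' s) = μ s := by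
  rw [S.image_eq_preimage_symm, (hS.symm S).measure_preimage_equiv]

lemma measure_image_inter_inter (hS : MeasurePreserving S μ μ) (D U V : Set X) :
    μ (S '' D ∩ S '' U ∩ S '' V) = μ (D ∩ U ∩ V) := by
  rw [← image_inter S.injective, ← image_inter S.injective, hS.measure_image_equiv]

lemma measure_image_inter_inter_le (hS : MeasurePreserving S μ μ) (D U V : Set X) :
    μ (S '' D ∩ U ∩ V) ≤ μ (D ∩ U ∩ V) + (μ ((S '' U) ∆ U) + μ ((S '' V) ∆ V)) := by
  have h := measure_inter_inter_le_add_symmDiff μ (S '' D) (S '' U) (S '' V) U V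
  rwa [hS.measure_image_inter_inter, symmDiff_comm U, symmDiff_comm V] at h

lemma measure_inter_inter_le_image (hS : MeasurePreserving S μ μ) (D U V : Set X) :
    μ (D ∩ U ∩ V) ≤ μ (S '' D ∩ U ∩ V) + (μ ((S '' U) ∆ U) + μ ((S '' V) ∆ V)) := by
  rw [← hS.measure_image_inter_inter D U V]
  exact measure_inter_inter_le_add_symmDiff μ _ _ _ _ _

end MeasureTheory.MeasurePreserving

def IsHomoclinic (μ : Measure X) (T : ℕ → X ≃ᵐ X) (S : X ≃ᵐ X) : Prop :=
  ∀ D : Set X, MeasurableSet D →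
    Tendsto (fun n => μ (D ∆ ((fun x => (T n).symm (S (T n x))) '' D))) atTop (𝓝 0)

lemma IsHomoclinic.tendsto_measure_image_symmDiff {T : ℕ → X ≃ᵐ X} {S : X ≃ᵐ X}
    (hS : IsHomoclinic μ T S) (hT : ∀ n, MeasurePreserving (T n) μ μ) {E : Set X}
    (hE : MeasurableSet E) :
    Tendsto (fun n => μ ((S '' (T n '' E)) ∆ (T n '' E))) atTop (𝓝 0) := by
  refine (hS E hE).congr fun n => ?_
  have hconj : E ∆ ((fun x => (T n).symm (S (T n x))) '' E)
      = T n ⁻¹' ((S '' (T n '' E)) ∆ (T n '' E)) := by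
    rw [preimage_symmDiff, (T n).injective.preimage_image, symmDiff_comm, image_image,
      ← (T n).image_symm, image_image]
  rw [hconj, (hT n).measure_preimage_equiv]

noncomputable def sliceMeasure {Y : Type*} [MeasurableSpace Y] (ν : Measure (X × Y))
    (t : Set Y) : Measure X :=
  (ν.restrict (univ ×ˢ t)).map Prod.fst

section sliceMeasure

variable {Y : Type*} [MeasurableSpace Y] (ν : Measure (X × Y)) (t : Set Y)

lemma sliceMeasure_apply {s : Set X} (hs : MeasurableSet s) :
    sliceMeasure ν t s = ν (s ×ˢ t) := by
  rw [sliceMeasure, Measure.map_apply measurable_fst hs,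
    Measure.restrict_apply (measurable_fst hs), ← prod_univ, prod_inter_prod, inter_univ,
    univ_inter]

instance [IsFiniteMeasure ν] : IsFiniteMeasure (sliceMeasure ν t) := by
  unfold sliceMeasure; infer_instance

end sliceMeasure

lemma ae_eq_const_of_forall_measure_preimage [IsProbabilityMeasure μ] {Y : Type*}
    [MeasurableSpace Y] [Nonempty Y] [MeasurableSpace.CountablySeparated Y] {f : X → Y}
    (hf : Measurable f) (h : ∀ G, MeasurableSet G → μ (f ⁻¹' G) = 0 ∨ μ (f ⁻¹' G) = 1) :
    ∃ c, f =ᵐ[μ] fun _ => c :=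
  exists_eventuallyEq_const_of_forall_separating MeasurableSet fun G hG =>
    (h G hG).symm.imp (mem_ae_iff_prob_eq_one (hf hG)).mpr measure_eq_zero_iff_ae_notMem.mp

lemma rnDeriv_comp_symm_ae_eq [SigmaFinite μ] (ρ : Measure X) [SigmaFinite ρ] {S : X ≃ᵐ X}
    (hS : MeasurePreserving S μ μ) (hρS : ρ.map S = ρ) :
    (fun x => ρ.rnDeriv μ (S.symm x)) =ᵐ[μ] ρ.rnDeriv μ := by
  have h := S.measurableEmbedding.rnDeriv_map ρ μ
  rw [hρS, hS.map_eq] at h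
  have h' := (hS.symm S).quasiMeasurePreserving.ae_eq_comp h
  simpa [Function.comp_def] using h'.symm

lemma eq_smul_of_forall_map_eq [IsProbabilityMeasure μ] {ρ : Measure X} [IsFiniteMeasure ρ]
    (hρμ : ρ ≪ μ) {P : (X ≃ᵐ X) → Prop} (hP : ∀ S, P S → MeasurePreserving S μ μ)
    (herg : ∀ A, MeasurableSet A → (∀ S, P S → μ ((S '' A) ∆ A) = 0) → μ A = 0 ∨ μ A = 1)
    (hρ : ∀ S, P S → ρ.map S = ρ) : ρ = ρ univ • μ := by
  have hf := Measure.measurable_rnDeriv ρ μ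
  obtain ⟨c, hc⟩ := ae_eq_const_of_forall_measure_preimage hf fun G hG =>
    herg _ (hf hG) fun S hS => by
      rw [S.image_eq_preimage_symm, ← preimage_comp, measure_symmDiff_eq_zero_iff]
      exact (rnDeriv_comp_symm_ae_eq ρ (hP S hS) (hρ S hS)).fun_comp (· ∈ G)
  have hρc : ρ = c • μ := by
    rw [← Measure.withDensity_rnDeriv_eq ρ μ hρμ, withDensity_congr_ae hc, withDensity_const]
  rw [hρc]
  simp

def IsLimitJoining (μ : Measure X) (Ti Tj : ℕ → X ≃ᵐ X) (ν : Measure (X × X × X)) : Prop :=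
  ∀ A B C : Set X, MeasurableSet A → MeasurableSet B → MeasurableSet C →
    Tendsto (fun p : ℕ × ℕ => μ (A ∩ (Ti p.1) '' B ∩ (Tj p.2) '' C))
      (atTop ×ˢ atTop) (𝓝 (ν (A ×ˢ B ×ˢ C)))

namespace IsLimitJoining

variable {Ti Tj : ℕ → X ≃ᵐ X} {ν : Measure (X × X × X)} {A B C : Set X}

lemma apply_prod_le (hν : IsLimitJoining μ Ti Tj ν) (hA : MeasurableSet A)
    (hB : MeasurableSet B) (hC : MeasurableSet C) : ν (A ×ˢ B ×ˢ C) ≤ μ A :=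
  le_of_tendsto (hν A B C hA hB hC) <|
    Eventually.of_forall fun _ => measure_mono fun _ hx => hx.1.1

lemma apply_image_prod [IsFiniteMeasure μ] (hν : IsLimitJoining μ Ti Tj ν)
    (hTi : ∀ n, MeasurePreserving (Ti n) μ μ) (hTj : ∀ n, MeasurePreserving (Tj n) μ μ)
    {S : X ≃ᵐ X} (hS : MeasurePreserving S μ μ) (hSi : IsHomoclinic μ Ti S)
    (hSj : IsHomoclinic μ Tj S) {D : Set X} (hD : MeasurableSet D) (hB : MeasurableSet B) (hC : MeasurableSet C) :
    ν ((S '' D) ×ˢ B ×ˢ C) = ν (D ×ˢ B ×ˢ C) := by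
  have herr : Tendsto (fun p : ℕ × ℕ => μ ((S '' (Ti p.1 '' B)) ∆ (Ti p.1 '' B))
      + μ ((S '' (Tj p.2 '' C)) ∆ (Tj p.2 '' C))) (atTop ×ˢ atTop) (𝓝 0) := by
    simpa using ((hSi.tendsto_measure_image_symmDiff hTi hB).comp tendsto_fst).add
      ((hSj.tendsto_measure_image_symmDiff hTj hC).comp tendsto_snd)
  refine tendsto_nhds_unique (hν _ B C (S.measurableSet_image.mpr hD) hB hC) ?_
  exact ENNReal.tendsto_of_le_add_of_le_add
    ((hν.apply_prod_le hD hB hC).trans_lt (measure_lt_top μ D)).ne (hν D B C hD hB hC) herr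
    (fun _ => hS.measure_image_inter_inter_le D _ _)
    (fun _ => hS.measure_inter_inter_le_image D _ _)

lemma sliceMeasure_absolutelyContinuous (hν : IsLimitJoining μ Ti Tj ν) (hB : MeasurableSet B)
    (hC : MeasurableSet C) : sliceMeasure ν (B ×ˢ C) ≪ μ :=
  .mk fun s hs hμs => by
    rw [sliceMeasure_apply _ _ hs, ← nonpos_iff_eq_zero, ← hμs]
    exact hν.apply_prod_le hs hB hC

lemma map_sliceMeasure_eq [IsFiniteMeasure μ] (hν : IsLimitJoining μ Ti Tj ν)
    (hTi : ∀ n, MeasurePreserving (Ti n) μ μ) (hTj : ∀ n, MeasurePreserving (Tj n) μ μ)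
    {S : X ≃ᵐ X} (hS : MeasurePreserving S μ μ) (hSi : IsHomoclinic μ Ti S)
    (hSj : IsHomoclinic μ Tj S) (hB : MeasurableSet B) (hC : MeasurableSet C) :
    (sliceMeasure ν (B ×ˢ C)).map S = sliceMeasure ν (B ×ˢ C) := by
  ext s hs
  rw [Measure.map_apply S.measurable hs, sliceMeasure_apply _ _ (S.measurable hs),
    sliceMeasure_apply _ _ hs, ← hν.apply_image_prod hTi hTj hS hSi hSj (S.measurable hs) hB hC,
    image_preimage_eq _ S.surjective]

end IsLimitJoining

end

/-- Under the hypotheses of the previous lemma, if moreover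
`ν(X × B × C) = μ(B)μ(C)` for all `B, C` and the collection of all automorphisms
`S` with `T_i⁻¹ S T_i → Id`, `T_j⁻¹ S T_j → Id` generates an ergodic action, then
`ν = μ × μ × μ`. -/
theorem stmt11 {X : Type*} [MeasurableSpace X] (μ : Measure X)
    [IsProbabilityMeasure μ]
    (Ti Tj : ℕ → X ≃ᵐ X)
    (hTi : ∀ n, MeasurePreserving (Ti n) μ μ) (hTj : ∀ n, MeasurePreserving (Tj n) μ μ)
    (ν : Measure (X × X × X))
    (hlim : ∀ A B C : Set X, MeasurableSet A → MeasurableSet B → MeasurableSet C →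
      Tendsto (fun p : ℕ × ℕ => μ (A ∩ (Ti p.1) '' B ∩ (Tj p.2) '' C))
        (atTop ×ˢ atTop) (nhds (ν (A ×ˢ B ×ˢ C))))
    (hprod : ∀ B C : Set X, MeasurableSet B → MeasurableSet C →
      ν (univ ×ˢ B ×ˢ C) = μ B * μ C)
    -- the homoclinic automorphisms (those satisfying condition (1)) generate an
    -- ergodic action
    (herg : ∀ A : Set X, MeasurableSet A →
      (∀ S : X ≃ᵐ X, MeasurePreserving S μ μ →
        (∀ D : Set X, MeasurableSet D →
          Tendsto (fun n => μ (D ∆ ((fun x => (Ti n).symm (S (Ti n x))) '' D))) atTop (nhds 0)) →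
        (∀ D : Set X, MeasurableSet D →
          Tendsto (fun n => μ (D ∆ ((fun x => (Tj n).symm (S (Tj n x))) '' D))) atTop (nhds 0)) →
        μ ((S '' A) ∆ A) = 0) →
      μ A = 0 ∨ μ A = 1) :
    ν = μ.prod (μ.prod μ) := by
  have hν : IsLimitJoining μ Ti Tj ν := hlim
  have : IsProbabilityMeasure ν := ⟨by simpa using hprod univ univ .univ .univ⟩
  refine Measure.ext_prod₃ fun {A B C} hA hB hC => ?_
  have hslice : sliceMeasure ν (B ×ˢ C) = (μ B * μ C) • μ := by
    have h := eq_smul_of_forall_map_eq (hν.sliceMeasure_absolutelyContinuous hB hC)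
      (P := fun S => MeasurePreserving S μ μ ∧ IsHomoclinic μ Ti S ∧ IsHomoclinic μ Tj S)
      (fun S hS => hS.1) (fun A hA h => herg A hA fun S hS hSi hSj => h S ⟨hS, hSi, hSj⟩)
      (fun S hS => hν.map_sliceMeasure_eq hTi hTj hS.1 hS.2.1 hS.2.2 hB hC)
    rwa [sliceMeasure_apply _ _ .univ, hprod B C hB hC] at h
  rw [← sliceMeasure_apply ν _ hA, hslice, Measure.prod_prod, Measure.prod_prod,
    Measure.smul_apply, smul_eq_mul, mul_comm]
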